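/- arXiv:1310.0655 — 2 statements merged into one kernel-verified Lean document; each statement's English description precedes it below -/
import Mathlib

section
/- Fix an inner product <.,.> on R^m. Let X = (X_J, X_{~J}) where the random subvectors X_J and X_{~J} are independent, and let f be measurable with f(X) a square-integrable R^m-valued random vector. Set D = Var(f(X)), V_{X_J} = Var(E(f(X)|X_J)) and V^tot_{X_J} = D - Var(E(f(X)|X_{~J})), where Var denotes the generalized variance induced by <.,.> and conditional expectations are coordinatewise. Then 0 <= V_{X_J} <= V^tot_{X_J} <= D. -/
/-! Let `W = f(X) - E f(X)`. In `L²(μ; E)` the conditional expectations onto `σ(X_J)` and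
`σ(X_{~J})` are orthogonal projections `P` and `Q`, so `V_{X_J} = ‖PW‖²` with `⟪W, PW⟫ = ‖PW‖²`,
and likewise for `Q`. Independence makes `PW ⟂ QW`: both have mean zero, and the mean of the
inner product of independent variables is the inner product of their means. Expanding
`‖W - PW - QW‖² ≥ 0` then gives `V_{X_J} + Var(E(f(X)|X_{~J})) ≤ D`. -/

open MeasureTheory ProbabilityTheory

/-- The generalized variance `Var(Z) = E[‖Z - E Z‖²]` for a random vector `Z` with values in a
real inner product space with its induced norm. -/
noncomputable def gVar {Ω E : Type*} [MeasurableSpace Ω]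
    [NormedAddCommGroup E] [InnerProductSpace ℝ E] [FiniteDimensional ℝ E]
    (μ : Measure Ω) (Z : Ω → E) : ℝ :=
  ∫ ω, ‖Z ω - ∫ ω', Z ω' ∂μ‖ ^ 2 ∂μ

open scoped RealInnerProductSpace

lemma norm_sq_add_norm_sq_le_of_inner_eq {F : Type*} [NormedAddCommGroup F]
    [InnerProductSpace ℝ F] {w u v : F} (hu : ⟪w, u⟫ = ‖u‖ ^ 2) (hv : ⟪w, v⟫ = ‖v‖ ^ 2)
    (huv : ⟪u, v⟫ = 0) :
    ‖u‖ ^ 2 + ‖v‖ ^ 2 ≤ ‖w‖ ^ 2 := by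
  have h := sq_nonneg ‖w - (u + v)‖
  rw [norm_sub_sq_real, norm_add_sq_real, inner_add_right, hu, hv, huv] at h
  linarith

section

variable {Ω E : Type*} {m₁ m₂ m : MeasurableSpace Ω} [m₀ : MeasurableSpace Ω] {μ : Measure Ω}
  [NormedAddCommGroup E] [InnerProductSpace ℝ E]

lemma MeasureTheory.L2.integral_norm_sq_eq_norm_sq (F : Lp E 2 μ) :
    ∫ ω, ‖F ω‖ ^ 2 ∂μ = ‖F‖ ^ 2 := by
  rw [← real_inner_self_eq_norm_sq, L2.inner_def]
  simp only [real_inner_self_eq_norm_sq]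

lemma ProbabilityTheory.Indep.integral_inner_eq_inner_integral [CompleteSpace E]
    (hindep : Indep m₁ m₂ μ) {G H : Ω → E} (hG : StronglyMeasurable[m₁] G) (hH : StronglyMeasurable[m₂] H)
    (hGi : Integrable G μ) (hHi : Integrable H μ) :
    ∫ ω, ⟪G ω, H ω⟫ ∂μ = ⟪∫ ω, G ω ∂μ, ∫ ω, H ω ∂μ⟫ := by
  borelize E
  have hGH : G ⟂ᵢ[μ] H := by
    rw [IndepFun_iff_Indep]
    exact indep_of_indep_of_le_right (indep_of_indep_of_le_left hindep hG.measurable.comap_le)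
      hH.measurable.comap_le
  exact hGH.integral_bilin hGi hHi (innerSL ℝ)

lemma inner_condExpL2_eq_norm_sq [CompleteSpace E] (hm : m ≤ m₀) (f : Lp E 2 μ) :
    ⟪f, condExpL2 E ℝ hm f⟫ = ‖(condExpL2 E ℝ hm f : Lp E 2 μ)‖ ^ 2 := by
  rw [← inner_condExpL2_eq_inner_fun hm _ _ (aestronglyMeasurable_condExpL2 hm f),
    real_inner_self_eq_norm_sq]

lemma integral_norm_sq_condExp_eq [IsFiniteMeasure μ] [CompleteSpace E] (hm : m ≤ m₀)
    {W : Ω → E} (hW : MemLp W 2 μ) :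
    ∫ ω, ‖μ[W|m] ω‖ ^ 2 ∂μ = ‖(condExpL2 E ℝ hm (hW.toLp W) : Lp E 2 μ)‖ ^ 2 := by
  rw [← L2.integral_norm_sq_eq_norm_sq]
  exact integral_congr_ae ((hW.condExpL2_ae_eq_condExp (𝕜 := ℝ) hm).fun_comp (‖·‖ ^ 2)).symm

lemma integral_norm_sq_condExp_add_le [IsFiniteMeasure μ] [CompleteSpace E]
    (hindep : Indep m₁ m₂ μ) (hm₁ : m₁ ≤ m₀) (hm₂ : m₂ ≤ m₀) {W : Ω → E} (hW : MemLp W 2 μ)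
    (hW0 : ∫ ω, W ω ∂μ = 0) :
    ∫ ω, ‖μ[W|m₁] ω‖ ^ 2 ∂μ + ∫ ω, ‖μ[W|m₂] ω‖ ^ 2 ∂μ ≤ ∫ ω, ‖W ω‖ ^ 2 ∂μ := by
  have orthogonal : ⟪(condExpL2 E ℝ hm₁ (hW.toLp W) : Lp E 2 μ),
      (condExpL2 E ℝ hm₂ (hW.toLp W) : Lp E 2 μ)⟫ = 0 := by
    calc _ = ∫ ω, ⟪μ[W|m₁] ω, μ[W|m₂] ω⟫ ∂μ := by
          refine integral_congr_ae ?_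
          filter_upwards [hW.condExpL2_ae_eq_condExp (𝕜 := ℝ) hm₁,
            hW.condExpL2_ae_eq_condExp (𝕜 := ℝ) hm₂] with ω h₁ h₂
          rw [h₁, h₂]
      _ = ⟪∫ ω, μ[W|m₁] ω ∂μ, ∫ ω, μ[W|m₂] ω ∂μ⟫ :=
          hindep.integral_inner_eq_inner_integral stronglyMeasurable_condExp
            stronglyMeasurable_condExp integrable_condExp integrable_condExp
      _ = 0 := by rw [integral_condExp hm₁, hW0, inner_zero_left]
  have integral_norm_sq_W : ∫ ω, ‖W ω‖ ^ 2 ∂μ = ‖hW.toLp W‖ ^ 2 := by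
    rw [← L2.integral_norm_sq_eq_norm_sq]
    exact integral_congr_ae (hW.coeFn_toLp.fun_comp (‖·‖ ^ 2)).symm
  rw [integral_norm_sq_condExp_eq hm₁ hW, integral_norm_sq_condExp_eq hm₂ hW, integral_norm_sq_W]
  exact norm_sq_add_norm_sq_le_of_inner_eq (inner_condExpL2_eq_norm_sq hm₁ _)
    (inner_condExpL2_eq_norm_sq hm₂ _) orthogonal

lemma gVar_nonneg [FiniteDimensional ℝ E] (μ : Measure Ω) (Z : Ω → E) : 0 ≤ gVar μ Z :=
  integral_nonneg fun _ => sq_nonneg _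

lemma gVar_condExp_eq [IsFiniteMeasure μ] [FiniteDimensional ℝ E] (hm : m ≤ m₀)
    {Y : Ω → E} (hY : Integrable Y μ) :
    gVar μ (μ[Y|m]) = ∫ ω, ‖μ[fun ω => Y ω - ∫ ω', Y ω' ∂μ|m] ω‖ ^ 2 ∂μ := by
  have centered : μ[fun ω => Y ω - ∫ ω', Y ω' ∂μ|m] =ᵐ[μ] fun ω => μ[Y|m] ω - ∫ ω', Y ω' ∂μ := by
    filter_upwards [condExp_sub hY (integrable_const (∫ ω', Y ω' ∂μ)) m] with ω h
    exact h.trans (by rw [Pi.sub_apply, condExp_const hm])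
  rw [gVar, integral_condExp hm]
  exact integral_congr_ae (centered.fun_comp (‖·‖ ^ 2)).symm

theorem gVar_condExp_add_gVar_condExp_le [IsProbabilityMeasure μ] [FiniteDimensional ℝ E]
    (hindep : Indep m₁ m₂ μ) (hm₁ : m₁ ≤ m₀) (hm₂ : m₂ ≤ m₀) {Y : Ω → E} (hY : MemLp Y 2 μ) :
    gVar μ (μ[Y|m₁]) + gVar μ (μ[Y|m₂]) ≤ gVar μ Y := by
  have hYi : Integrable Y μ := hY.integrable one_le_two
  have centered_mean : ∫ ω, (Y ω - ∫ ω', Y ω' ∂μ) ∂μ = 0 := by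
    rw [integral_sub hYi (integrable_const _), integral_const, probReal_univ, one_smul, sub_self]
  rw [gVar_condExp_eq hm₁ hYi, gVar_condExp_eq hm₂ hYi]
  exact integral_norm_sq_condExp_add_le hindep hm₁ hm₂ (hY.sub (memLp_const _)) centered_mean

end

theorem sensitivity_indices_ordering_general
    {Ω α β E : Type*} [MeasurableSpace Ω] [MeasurableSpace α] [MeasurableSpace β]
    [NormedAddCommGroup E] [InnerProductSpace ℝ E] [FiniteDimensional ℝ E]
    (μ : Measure Ω) [IsProbabilityMeasure μ]
    (XJ : Ω → α) (XnJ : Ω → β) (hXJ : Measurable XJ) (hXnJ : Measurable XnJ)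
    (hindep : IndepFun XJ XnJ μ)
    (f : α × β → E)
    (hf2 : MemLp (fun ω => f (XJ ω, XnJ ω)) 2 μ) :
    0 ≤ gVar μ (μ[(fun ω => f (XJ ω, XnJ ω)) | MeasurableSpace.comap XJ inferInstance])
    ∧ gVar μ (μ[(fun ω => f (XJ ω, XnJ ω)) | MeasurableSpace.comap XJ inferInstance])
        ≤ gVar μ (fun ω => f (XJ ω, XnJ ω))
          - gVar μ (μ[(fun ω => f (XJ ω, XnJ ω)) | MeasurableSpace.comap XnJ inferInstance])
    ∧ gVar μ (fun ω => f (XJ ω, XnJ ω))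
          - gVar μ (μ[(fun ω => f (XJ ω, XnJ ω)) | MeasurableSpace.comap XnJ inferInstance])
        ≤ gVar μ (fun ω => f (XJ ω, XnJ ω)) := by
  have key := gVar_condExp_add_gVar_condExp_le ((IndepFun_iff_Indep XJ XnJ μ).1 hindep)
    hXJ.comap_le hXnJ.comap_le hf2
  exact ⟨gVar_nonneg _ _, le_sub_iff_add_le.2 key, sub_le_self _ (gVar_nonneg _ _)⟩

/-- For `X = (X_J, X_{~J})` with independent subvectors and `f(X)` square-integrable with values
in `ℝᵐ` with an arbitrary inner product (a finite-dimensional real inner product space), the main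
sensitivity index `V_{X_J} = Var(E(f(X)|X_J))` and total sensitivity index
`V^tot_{X_J} = D - Var(E(f(X)|X_{~J}))`, where `D = Var(f(X))`, satisfy
`0 ≤ V_{X_J} ≤ V^tot_{X_J} ≤ D`. -/
theorem sensitivity_indices_ordering
    {Ω α β E : Type*} [MeasurableSpace Ω] [MeasurableSpace α] [MeasurableSpace β]
    [NormedAddCommGroup E] [InnerProductSpace ℝ E] [FiniteDimensional ℝ E]
    [MeasurableSpace E] [BorelSpace E]
    (μ : Measure Ω) [IsProbabilityMeasure μ]
    (XJ : Ω → α) (XnJ : Ω → β) (hXJ : Measurable XJ) (hXnJ : Measurable XnJ)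
    (hindep : IndepFun XJ XnJ μ)
    (f : α × β → E) (hf : Measurable f)
    (hf2 : MemLp (fun ω => f (XJ ω, XnJ ω)) 2 μ) :
    0 ≤ gVar μ (μ[(fun ω => f (XJ ω, XnJ ω)) | MeasurableSpace.comap XJ inferInstance])
    ∧ gVar μ (μ[(fun ω => f (XJ ω, XnJ ω)) | MeasurableSpace.comap XJ inferInstance])
        ≤ gVar μ (fun ω => f (XJ ω, XnJ ω))
          - gVar μ (μ[(fun ω => f (XJ ω, XnJ ω)) | MeasurableSpace.comap XnJ inferInstance])
    ∧ gVar μ (fun ω => f (XJ ω, XnJ ω))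
          - gVar μ (μ[(fun ω => f (XJ ω, XnJ ω)) | MeasurableSpace.comap XnJ inferInstance])
        ≤ gVar μ (fun ω => f (XJ ω, XnJ ω)) :=
  sensitivity_indices_ordering_general μ XJ XnJ hXJ hXnJ hindep f hf2
end

section
/- Fix an inner product <.,.> on R^m with induced norm |.|. Let X = (X_J, X_{~J}) with X_J and X_{~J} independent, let Y_J have the same distribution as X_J and be independent of X, and let f be measurable with f(X) square-integrable R^m-valued. If the total sensitivity index V^tot_{X_J} = Var(f(X)) - Var(E(f(X)|X_{~J})) equals 0, then f(Y_J, X_{~J}) = f(X) almost surely; equivalently, for mu_{X_J}-almost every y_J, f(y_J, X_{~J}) = f(X) almost surely. -/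
/-!
The total index is the expected squared residual of `f(X)` against `E(f(X) | X_{~J})`: by
Pythagoras, since the residual is orthogonal to every `X_{~J}`-measurable vector. If it vanishes,
`f(X) = g(X_{~J})` almost surely for a measurable `g` (Doob–Dynkin), i.e. `f(x) = g(x_{~J})` for
almost every `x` under the law `μ_{X_J} ⊗ μ_{X_{~J}}` of `X`. This is also the law of
`(Y_J, X_{~J})`, and slicing the product measure (Fubini) gives the second form.
-/

open MeasureTheory ProbabilityTheory

open scoped InnerProductSpace

section

variable {Ω E : Type*} {m m0 : MeasurableSpace Ω} {μ : Measure Ω}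
  [NormedAddCommGroup E] [InnerProductSpace ℝ E]

theorem integrable_inner_of_memLp_two {V W : Ω → E} (hV : MemLp V 2 μ) (hW : MemLp W 2 μ) :
    Integrable (fun ω => ⟪V ω, W ω⟫_ℝ) μ :=
  memLp_one_iff_integrable.1 ((innerSL ℝ).memLp_of_bilin 1 hV hW)

theorem integral_inner_condExp [CompleteSpace E] (hm : m ≤ m0) [SigmaFinite (μ.trim hm)]
    {W Z : Ω → E} (hW : AEStronglyMeasurable[m] W μ)
    (hWZ : Integrable (fun ω => ⟪W ω, Z ω⟫_ℝ) μ) (hZ : Integrable Z μ) :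
    ∫ ω, ⟪W ω, μ[Z|m] ω⟫_ℝ ∂μ = ∫ ω, ⟪W ω, Z ω⟫_ℝ ∂μ := by
  have hpull : μ[fun ω => ⟪W ω, Z ω⟫_ℝ | m] =ᵐ[μ] fun ω => ⟪W ω, μ[Z|m] ω⟫_ℝ :=
    condExp_bilin_of_aestronglyMeasurable_left (innerSL ℝ) hW hWZ hZ
  rw [← integral_congr_ae hpull, integral_condExp hm]

theorem gVar_sub_gVar_condExp [FiniteDimensional ℝ E] [IsFiniteMeasure μ] (hm : m ≤ m0)
    {Z : Ω → E} (hZ : MemLp Z 2 μ) :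
    gVar μ Z - gVar μ (μ[Z|m]) = ∫ ω, ‖Z ω - μ[Z|m] ω‖ ^ 2 ∂μ := by
  set Y := μ[Z|m]
  set c := ∫ ω, Z ω ∂μ
  have hY : MemLp Y 2 μ := hZ.condExp one_le_two
  have hR : MemLp (fun ω => Z ω - Y ω) 2 μ := hZ.sub hY
  have hC : MemLp (fun ω => Y ω - c) 2 μ := hY.sub (memLp_const c)
  have horth : ∫ ω, ⟪Y ω - c, Z ω - Y ω⟫_ℝ ∂μ = 0 := by
    have hCm : AEStronglyMeasurable[m] (fun ω => Y ω - c) μ :=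
      (stronglyMeasurable_condExp.sub stronglyMeasurable_const).aestronglyMeasurable
    simp_rw [inner_sub_right]
    rw [integral_sub (integrable_inner_of_memLp_two hC hZ) (integrable_inner_of_memLp_two hC hY),
      integral_inner_condExp hm hCm (integrable_inner_of_memLp_two hC hZ)
        (hZ.integrable one_le_two), sub_self]
  have hsplit (ω : Ω) :
      ‖Z ω - c‖ ^ 2 = ‖Z ω - Y ω‖ ^ 2 + 2 * ⟪Y ω - c, Z ω - Y ω⟫_ℝ + ‖Y ω - c‖ ^ 2 := by
    rw [show Z ω - c = (Z ω - Y ω) + (Y ω - c) by abel, norm_add_sq_real, real_inner_comm]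
  have hmean : ∫ ω, Y ω ∂μ = c := integral_condExp hm
  have hRsq : Integrable (fun ω => ‖Z ω - Y ω‖ ^ 2) μ := hR.integrable_norm_pow two_ne_zero
  have hCsq : Integrable (fun ω => ‖Y ω - c‖ ^ 2) μ := hC.integrable_norm_pow two_ne_zero
  have hcross : Integrable (fun ω => 2 * ⟪Y ω - c, Z ω - Y ω⟫_ℝ) μ :=
    (integrable_inner_of_memLp_two hC hR).const_mul 2
  have hRcross : Integrable (fun ω => ‖Z ω - Y ω‖ ^ 2 + 2 * ⟪Y ω - c, Z ω - Y ω⟫_ℝ) μ :=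
    hRsq.add hcross
  rw [gVar, gVar, hmean, integral_congr_ae (.of_forall hsplit), integral_add hRcross hCsq,
    integral_add hRsq hcross, integral_const_mul, horth]
  ring

theorem ae_eq_condExp_of_gVar_sub_gVar_condExp_eq_zero [FiniteDimensional ℝ E]
    [IsFiniteMeasure μ] (hm : m ≤ m0) {Z : Ω → E} (hZ : MemLp Z 2 μ)
    (h : gVar μ Z - gVar μ (μ[Z|m]) = 0) :
    Z =ᵐ[μ] μ[Z|m] := by
  have hint : Integrable (fun ω => ‖Z ω - μ[Z|m] ω‖ ^ 2) μ :=
    (hZ.sub (hZ.condExp one_le_two)).integrable_norm_pow two_ne_zero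
  rw [gVar_sub_gVar_condExp hm hZ,
    integral_eq_zero_iff_of_nonneg (fun _ => by positivity) hint] at h
  filter_upwards [h] with ω hω
  simpa [sub_eq_zero] using hω

end

theorem total_index_zero_fixing_general
    {Ω α β E : Type*} [MeasurableSpace Ω] [MeasurableSpace α] [MeasurableSpace β]
    [NormedAddCommGroup E] [InnerProductSpace ℝ E] [FiniteDimensional ℝ E]
    [MeasurableSpace E] [BorelSpace E]
    (μ : Measure Ω) [IsProbabilityMeasure μ]
    (XJ YJ : Ω → α) (XnJ : Ω → β)
    (hXJ : Measurable XJ) (hXnJ : Measurable XnJ)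
    (hindep : IndepFun XJ XnJ μ)
    (hYid : IdentDistrib YJ XJ μ μ)
    (hYindep : IndepFun YJ (fun ω => (XJ ω, XnJ ω)) μ)
    (f : α × β → E) (hf : Measurable f)
    (hf2 : MemLp (fun ω => f (XJ ω, XnJ ω)) 2 μ)
    (htot : gVar μ (fun ω => f (XJ ω, XnJ ω))
        - gVar μ (μ[(fun ω => f (XJ ω, XnJ ω)) | MeasurableSpace.comap XnJ inferInstance]) = 0) :
    (fun ω => f (YJ ω, XnJ ω)) =ᵐ[μ] (fun ω => f (XJ ω, XnJ ω))
    ∧ ∀ᵐ yJ ∂(μ.map XJ),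
        (fun ω => f (yJ, XnJ ω)) =ᵐ[μ] fun ω => f (XJ ω, XnJ ω) := by
  obtain ⟨g, hg, hcondExp⟩ := (stronglyMeasurable_condExp (μ := μ)
    (m := MeasurableSpace.comap XnJ inferInstance)
    (f := fun ω => f (XJ ω, XnJ ω))).exists_eq_measurable_comp
  have hfg : (fun ω => f (XJ ω, XnJ ω)) =ᵐ[μ] fun ω => g (XnJ ω) := by
    have := ae_eq_condExp_of_gVar_sub_gVar_condExp_eq_zero hXnJ.comap_le hf2 htot
    rwa [hcondExp] at this
  have hS : MeasurableSet {p : α × β | f p = g p.2} :=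
    measurableSet_eq_fun hf (hg.measurable.comp measurable_snd)
  have hident : IdentDistrib (fun ω => (XJ ω, XnJ ω)) (fun ω => (YJ ω, XnJ ω)) μ μ :=
    hYid.symm.prodMk (.refl hXnJ.aemeasurable) hindep (hYindep.comp measurable_id measurable_snd)
  refine ⟨Filter.EventuallyEq.trans (hident.ae_mem_snd hS hfg) hfg.symm, ?_⟩
  have hlaw : ∀ᵐ p ∂(μ.map XJ).prod (μ.map XnJ), f p = g p.2 := by
    rw [← (indepFun_iff_map_prod_eq_prod_map_map hXJ.aemeasurable hXnJ.aemeasurable).1 hindep]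
    exact (ae_map_iff (hXJ.prodMk hXnJ).aemeasurable hS).2 hfg
  filter_upwards [Measure.ae_ae_of_ae_prod hlaw] with yJ hyJ
  exact Filter.EventuallyEq.trans (ae_of_ae_map hXnJ.aemeasurable hyJ) hfg.symm

/-- If the total sensitivity index `V^tot_{X_J} = Var(f(X)) - Var(E(f(X)|X_{~J}))` vanishes,
then `f(Y_J, X_{~J}) = f(X)` almost surely, for `Y_J` an independent copy of `X_J` independent
of `X`; equivalently, for `μ_{X_J}`-almost every `y_J`, `f(y_J, X_{~J}) = f(X)` almost surely. -/
theorem total_index_zero_fixing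
    {Ω α β E : Type*} [MeasurableSpace Ω] [MeasurableSpace α] [MeasurableSpace β]
    [NormedAddCommGroup E] [InnerProductSpace ℝ E] [FiniteDimensional ℝ E]
    [MeasurableSpace E] [BorelSpace E]
    (μ : Measure Ω) [IsProbabilityMeasure μ]
    (XJ YJ : Ω → α) (XnJ : Ω → β)
    (hXJ : Measurable XJ) (hYJ : Measurable YJ) (hXnJ : Measurable XnJ)
    (hindep : IndepFun XJ XnJ μ)
    (hYid : IdentDistrib YJ XJ μ μ)
    (hYindep : IndepFun YJ (fun ω => (XJ ω, XnJ ω)) μ)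
    (f : α × β → E) (hf : Measurable f)
    (hf2 : MemLp (fun ω => f (XJ ω, XnJ ω)) 2 μ)
    (htot : gVar μ (fun ω => f (XJ ω, XnJ ω))
        - gVar μ (μ[(fun ω => f (XJ ω, XnJ ω)) | MeasurableSpace.comap XnJ inferInstance]) = 0) :
    (fun ω => f (YJ ω, XnJ ω)) =ᵐ[μ] (fun ω => f (XJ ω, XnJ ω))
    ∧ ∀ᵐ yJ ∂(μ.map XJ),
        (fun ω => f (yJ, XnJ ω)) =ᵐ[μ] fun ω => f (XJ ω, XnJ ω) :=
  total_index_zero_fixing_general μ XJ YJ XnJ hXJ hXnJ hindep hYid hYindep f hf hf2 htot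
end
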